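/- Let P_1, …, P_m be a Clifford system of signature (m, r) on ℝ^{2l}_s with m ≡ 0 (mod 4), r ≡ 0 (mod 2), and s ≤ 2l − 1, and set P := P_1P_2⋯P_m. If M_{+,1} is non-empty, then E_+(P) ∩ S^{2l−1}_s is non-empty and M_{+,1} is path-connected; likewise, if M_{+,2} is non-empty, then E_−(P) ∩ S^{2l−1}_s is non-empty and M_{+,2} is path-connected. -/

import Mathlib

/-!
Since `m ≡ 0 (mod 4)` and `r` is even, `A = P_1 ⋯ P_m` satisfies `A² = 1`, is self-adjoint for
`⟨·,·⟩` and anticommutes with every `P_j`. So the `P_j` exchange the eigenspaces `E_±(A)`, which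
are `⟨·,·⟩`-orthogonal, and for `z ∈ M₊` every point `c z₊ + t z₋` with
`c²⟨z₊,z₊⟩ + t²⟨z₋,z₋⟩ = 1` again lies in `M₊`. Letting `t` run from `1` to `0` joins each point
of `M_{+,1}` inside `M_{+,1}` to the unit pseudo-sphere of `E₊(A)`, which is contained in
`M_{+,1}`. That pseudo-sphere is path-connected: two of its points with `⟨w₁, w₂⟩ > -1` are
joined by the normalized segment, and `w` is joined to `-w` by `cos θ • w + sin θ • J w`, where
`J = P_1 P_2` is skew, satisfies `J² = -1` and commutes with `A`. As
`⟨z₊,z₊⟩ + ⟨z₋,z₋⟩ = ⟨z,z⟩ = 1`, the piece `M_{+,2}` is the piece `M_{+,1}` of `-A`.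
-/

open Matrix

noncomputable section

/-- Entries of the signature matrix `J_{r,m-r}`, with 1-based indices:
`η_{ii} = -1` for `1 ≤ i ≤ r` and `η_{ii} = 1` for `r < i`; off-diagonal entries vanish. -/
def cliffEta (r i j : ℕ) : ℝ :=
  if i = j then (if i ≤ r then -1 else 1) else 0

/-- The matrix `J_{s,n-s} = diag(-E_s, E_{n-s})`. -/
def psJ (n s : ℕ) : Matrix (Fin n) (Fin n) ℝ :=
  Matrix.diagonal fun i => if (i : ℕ) < s then (-1 : ℝ) else 1

/-- The pseudo-inner product `⟨u, v⟩ = uᵀ J_{s,n-s} v` of `ℝ^n_s`. -/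
def psInner (n s : ℕ) (u v : Fin n → ℝ) : ℝ :=
  u ⬝ᵥ ((psJ n s) *ᵥ v)

/-- A Clifford system of signature `(m, r)` on `ℝ^{2l}_s`, indexed by `1, …, m`:
each `P i` is symmetric with respect to the pseudo-inner product, and
`P i * P j + P j * P i = 2 η_{ij} E_{2l}`. -/
def IsCliffordSystem (l s m r : ℕ)
    (P : ℕ → Matrix (Fin (2 * l)) (Fin (2 * l)) ℝ) : Prop :=
  (∀ i ∈ Finset.Icc 1 m, (P i)ᵀ = psJ (2 * l) s * P i * psJ (2 * l) s) ∧
  (∀ i ∈ Finset.Icc 1 m, ∀ j ∈ Finset.Icc 1 m,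
    P i * P j + P j * P i
      = (2 * cliffEta r i j) • (1 : Matrix (Fin (2 * l)) (Fin (2 * l)) ℝ))


open Real

section BilinForm

variable {V : Type*} [AddCommGroup V] [Module ℝ V] {B : LinearMap.BilinForm ℝ V}
  {A : Module.End ℝ V}

theorem LinearMap.BilinForm.apply_smul_add_smul_self (B : LinearMap.BilinForm ℝ V)
    (a b : ℝ) (u v : V) :
    B (a • u + b • v) (a • u + b • v) =
      a ^ 2 * B u u + a * b * (B u v + B v u) + b ^ 2 * B v v := by
  simp only [map_add, map_smul, LinearMap.add_apply, LinearMap.smul_apply, smul_eq_mul]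
  ring

theorem LinearMap.IsAdjointPair.apply_eq_zero_of_eq_neg (hA : LinearMap.IsAdjointPair B B A A)
    {u v : V} (hu : A u = u) (hv : A v = -v) : B u v = 0 ∧ B v u = 0 := by
  have huv : B u v = -B u v := by
    conv_lhs => rw [← hu]
    rw [hA, hv, map_neg]
  have hvu : B v u = -B v u := by
    conv_lhs => rw [← hu]
    rw [← hA, hv, map_neg, LinearMap.neg_apply]
  constructor <;> linarith

theorem apply_apply_of_mul_eq_neg_mul {Q : Module.End ℝ V} (hQA : Q * A = -(A * Q)) (z : V) :
    A (Q z) = -Q (A z) := by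
  rw [← Module.End.mul_apply, ← Module.End.mul_apply, hQA, LinearMap.neg_apply, neg_neg]

variable (A) in
def posComponent (z : V) : V := (1 / 2 : ℝ) • (z + A z)

variable (A) in
def negComponent (z : V) : V := (1 / 2 : ℝ) • (z - A z)

theorem posComponent_add_negComponent (z : V) : posComponent A z + negComponent A z = z := by
  simp only [posComponent, negComponent]
  module

theorem posComponent_neg (z : V) : posComponent (-A) z = negComponent A z := by
  simp only [posComponent, negComponent, LinearMap.neg_apply, sub_eq_add_neg]

theorem apply_posComponent (hA2 : A * A = 1) (z : V) :
    A (posComponent A z) = posComponent A z := by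
  rw [posComponent, map_smul, map_add, ← Module.End.mul_apply, hA2, Module.End.one_apply,
    add_comm]

theorem apply_negComponent (hA2 : A * A = 1) (z : V) :
    A (negComponent A z) = -negComponent A z := by
  rw [negComponent, map_smul, map_sub, ← Module.End.mul_apply, hA2, Module.End.one_apply,
    ← smul_neg, neg_sub]

theorem apply_self_eq_posComponent_add_negComponent (hA2 : A * A = 1)
    (hA : LinearMap.IsAdjointPair B B A A) (z : V) :
    B z z = B (posComponent A z) (posComponent A z) +
      B (negComponent A z) (negComponent A z) := by
  obtain ⟨h₁, h₂⟩ :=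
    hA.apply_eq_zero_of_eq_neg (apply_posComponent hA2 z) (apply_negComponent hA2 z)
  conv_lhs => rw [← posComponent_add_negComponent (A := A) z, ← one_smul ℝ (posComponent A z),
    ← one_smul ℝ (negComponent A z)]
  rw [B.apply_smul_add_smul_self, h₁, h₂]
  ring

theorem apply_smul_add_smul_eq_mul_mul (hA : LinearMap.IsAdjointPair B B A A)
    {Q : Module.End ℝ V} (hQA : Q * A = -(A * Q)) {u v : V} (hu : A u = u) (hv : A v = -v)
    (a b : ℝ) :
    B (Q (a • u + b • v)) (a • u + b • v) = a * b * (B (Q u) v + B (Q v) u) := by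
  have hQu : A (Q u) = -Q u := by rw [apply_apply_of_mul_eq_neg_mul hQA, hu]
  have hQv : A (Q v) = Q v := by rw [apply_apply_of_mul_eq_neg_mul hQA, hv, map_neg, neg_neg]
  have := (B.compLeft Q).apply_smul_add_smul_self a b u v
  simp only [LinearMap.BilinForm.compLeft_apply] at this
  rw [this, (hA.apply_eq_zero_of_eq_neg hu hQu).2, (hA.apply_eq_zero_of_eq_neg hQv hv).1]
  ring

variable (B A) in
def fixedUnitSphere : Set V := {w | A w = w ∧ B w w = 1}

variable {ι : Type*} {P : ι → Module.End ℝ V}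

variable (B P) in
/-- `focalSet B P` is `M₊`; with `A = P_1 ⋯ P_m`, `upperFocalPiece` is `M_{+,1}` and
`lowerFocalPiece` is `M_{+,2}`. -/
def focalSet : Set V := {x | B x x = 1 ∧ ∀ j, B (P j x) x = 0}

variable (B A P) in
def upperFocalPiece : Set V :=
  {z ∈ focalSet B P | 1 ≤ B (posComponent A z) (posComponent A z)}

variable (B A P) in
def lowerFocalPiece : Set V :=
  {z ∈ focalSet B P | B (posComponent A z) (posComponent A z) ≤ 0}

theorem lowerFocalPiece_eq_upperFocalPiece_neg (hA2 : A * A = 1)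
    (hA : LinearMap.IsAdjointPair B B A A) :
    lowerFocalPiece B A P = upperFocalPiece B (-A) P := by
  ext z
  refine and_congr_right fun hz => ?_
  rw [posComponent_neg, ← hz.1, apply_self_eq_posComponent_add_negComponent hA2 hA z]
  constructor <;> intro h <;> linarith

theorem fixedUnitSphere_subset_upperFocalPiece (hA : LinearMap.IsAdjointPair B B A A)
    (hPA : ∀ j, P j * A = -(A * P j)) : fixedUnitSphere B A ⊆ upperFocalPiece B A P := by
  rintro w ⟨hAw, hw⟩
  have hpos : posComponent A w = w := by rw [posComponent, hAw]; module
  refine ⟨⟨hw, fun j => ?_⟩, by rw [hpos, hw]⟩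
  have hPw : A (P j w) = -P j w := by rw [apply_apply_of_mul_eq_neg_mul (hPA j), hAw]
  exact (hA.apply_eq_zero_of_eq_neg hAw hPw).2

theorem smul_posComponent_add_smul_negComponent_mem_upperFocalPiece (hA2 : A * A = 1)
    (hA : LinearMap.IsAdjointPair B B A A) (hPA : ∀ j, P j * A = -(A * P j)) {z : V}
    (hz : z ∈ focalSet B P) {c t : ℝ}
    (h₁ : c ^ 2 * B (posComponent A z) (posComponent A z) +
      t ^ 2 * B (negComponent A z) (negComponent A z) = 1)
    (h₂ : 1 ≤ c ^ 2 * B (posComponent A z) (posComponent A z)) :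
    c • posComponent A z + t • negComponent A z ∈ upperFocalPiece B A P := by
  have hu := apply_posComponent hA2 z
  have hv := apply_negComponent hA2 z
  have huv := hA.apply_eq_zero_of_eq_neg hu hv
  have hpos : posComponent A (c • posComponent A z + t • negComponent A z) =
      c • posComponent A z := by
    rw [posComponent, map_add, map_smul, map_smul, hu, hv]; module
  refine ⟨⟨?_, fun j => ?_⟩, ?_⟩
  · rw [B.apply_smul_add_smul_self, huv.1, huv.2]; linarith
  · have hz' := hz.2 j
    rw [← posComponent_add_negComponent (A := A) z, ← one_smul ℝ (posComponent A z),
      ← one_smul ℝ (negComponent A z), apply_smul_add_smul_eq_mul_mul hA (hPA j) hu hv] at hz'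
    rw [apply_smul_add_smul_eq_mul_mul hA (hPA j) hu hv]
    linear_combination (c * t) * hz'
  · simpa only [hpos, map_smul, LinearMap.smul_apply, smul_eq_mul, ← mul_assoc, ← sq] using h₂

end BilinForm

section PathConnected

variable {V : Type*} [AddCommGroup V] [Module ℝ V] [TopologicalSpace V] [ContinuousAdd V]
  [ContinuousSMul ℝ V] {B : LinearMap.BilinForm ℝ V} {A J : Module.End ℝ V}

theorem joinedIn_fixedUnitSphere_of_lt {w₁ w₂ : V} (h₁ : w₁ ∈ fixedUnitSphere B A)
    (h₂ : w₂ ∈ fixedUnitSphere B A) (h : -2 < B w₁ w₂ + B w₂ w₁) :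
    JoinedIn (fixedUnitSphere B A) w₁ w₂ := by
  set c := B w₁ w₂ + B w₂ w₁
  set q : ℝ → ℝ := fun u => (1 - u) ^ 2 + (1 - u) * u * c + u ^ 2
  have hq : ∀ u ∈ unitInterval, 0 < q u := by
    rintro u ⟨hu₀, hu₁⟩
    have hsq : q u = (1 - 2 * u) ^ 2 + (1 - u) * u * (2 + c) := by ring
    have hcross : 0 ≤ (1 - u) * u * (2 + c) :=
      mul_nonneg (mul_nonneg (sub_nonneg.2 hu₁) hu₀) (by linarith)
    rcases eq_or_ne u (1 / 2) with rfl | hu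
    · norm_num [q]; linarith
    · have : 0 < (1 - 2 * u) ^ 2 := sq_pos_of_ne_zero fun h => hu (by linarith)
      linarith
  refine JoinedIn.ofLine (f := fun u => (√(q u))⁻¹ • ((1 - u) • w₁ + u • w₂)) ?_ ?_ ?_ ?_
  · refine ContinuousOn.smul (ContinuousOn.inv₀ (by fun_prop) fun u hu => ?_) (by fun_prop)
    exact (Real.sqrt_pos.2 (hq u hu)).ne'
  · simp [q]
  · simp [q]
  · rintro _ ⟨u, hu, rfl⟩
    refine ⟨by simp [h₁.1, h₂.1], ?_⟩
    have hqu := hq u hu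
    simp only [map_smul, LinearMap.smul_apply, smul_eq_mul, B.apply_smul_add_smul_self, h₁.2,
      h₂.2]
    rw [← mul_assoc, ← mul_inv, Real.mul_self_sqrt hqu.le]
    field_simp
    ring

theorem joinedIn_fixedUnitSphere_neg (hJ2 : J * J = -1)
    (hJ : LinearMap.IsAdjointPair B B J (-J : Module.End ℝ V)) (hJA : Commute J A) {w : V}
    (hw : w ∈ fixedUnitSphere B A) :
    JoinedIn (fixedUnitSphere B A) w (-w) := by
  have hJJ : J (J w) = -w := by rw [← Module.End.mul_apply, hJ2]; rfl
  have hAJ : A (J w) = J w := by rw [← Module.End.mul_apply, ← hJA.eq, Module.End.mul_apply, hw.1]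
  have hJw : B (J w) (J w) = 1 := by rw [hJ, LinearMap.neg_apply, hJJ, neg_neg, hw.2]
  have hcross : B w (J w) + B (J w) w = 0 := by rw [hJ, LinearMap.neg_apply, map_neg]; ring
  refine JoinedIn.ofLine (f := fun u => cos (π * u) • w + sin (π * u) • J w)
    (by fun_prop) (by simp) (by simp) ?_
  rintro _ ⟨u, -, rfl⟩
  refine ⟨by simp [hw.1, hAJ], ?_⟩
  rw [B.apply_smul_add_smul_self, hw.2, hJw, hcross]
  nlinarith [sin_sq_add_cos_sq (π * u)]

theorem isPathConnected_fixedUnitSphere (hJ2 : J * J = -1)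
    (hJ : LinearMap.IsAdjointPair B B J (-J : Module.End ℝ V))
    (hJA : Commute J A) (hne : (fixedUnitSphere B A).Nonempty) :
    IsPathConnected (fixedUnitSphere B A) := by
  obtain ⟨w₀, hw₀⟩ := hne
  refine ⟨w₀, hw₀, fun w hw => ?_⟩
  by_cases h : -2 < B w₀ w + B w w₀
  · exact joinedIn_fixedUnitSphere_of_lt hw₀ hw h
  · have hw' : -w ∈ fixedUnitSphere B A := ⟨by simp [hw.1], by simp [hw.2]⟩
    refine (joinedIn_fixedUnitSphere_of_lt hw₀ hw' ?_).trans
      (joinedIn_fixedUnitSphere_neg hJ2 hJ hJA hw).symm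
    simp only [map_neg, LinearMap.neg_apply]
    linarith

variable {ι : Type*} {P : ι → Module.End ℝ V}

theorem exists_joinedIn_upperFocalPiece_fixedUnitSphere (hA2 : A * A = 1)
    (hA : LinearMap.IsAdjointPair B B A A) (hPA : ∀ j, P j * A = -(A * P j)) {z : V}
    (hz : z ∈ upperFocalPiece B A P) :
    ∃ w ∈ fixedUnitSphere B A, JoinedIn (upperFocalPiece B A P) z w := by
  set a := B (posComponent A z) (posComponent A z)
  set b := B (negComponent A z) (negComponent A z)
  have ha : 1 ≤ a := hz.2
  have hab : a + b = 1 := by rw [← hz.1.1, apply_self_eq_posComponent_add_negComponent hA2 hA]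
  -- the path shrinks `z₋` to `0`; the factor `c u` on `z₊` keeps it on the pseudo-sphere
  set c : ℝ → ℝ := fun u => √((1 - (1 - u) ^ 2 * b) / a)
  have hc : ∀ u, c u ^ 2 * a = 1 - (1 - u) ^ 2 * b := fun u => by
    rw [Real.sq_sqrt (div_nonneg (by nlinarith) (by linarith)), div_mul_cancel₀ _ (by positivity)]
  refine ⟨c 1 • posComponent A z, ⟨?_, ?_⟩, JoinedIn.ofLine
    (f := fun u => c u • posComponent A z + (1 - u) • negComponent A z)
    (by fun_prop) ?_ (by simp) ?_⟩
  · rw [map_smul, apply_posComponent hA2]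
  · simp only [map_smul, LinearMap.smul_apply, smul_eq_mul]
    linear_combination hc 1
  · have : c 0 = 1 := by simp [c, show 1 - b = a by linarith, div_self (by positivity : a ≠ 0)]
    simp [this, posComponent_add_negComponent]
  · rintro _ ⟨u, -, rfl⟩
    refine smul_posComponent_add_smul_negComponent_mem_upperFocalPiece hA2 hA hPA hz.1 ?_ ?_ <;>
      rw [hc u] <;> nlinarith [sq_nonneg (1 - u)]

theorem isPathConnected_upperFocalPiece (hA2 : A * A = 1) (hA : LinearMap.IsAdjointPair B B A A)
    (hPA : ∀ j, P j * A = -(A * P j)) (hJ2 : J * J = -1)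
    (hJ : LinearMap.IsAdjointPair B B J (-J : Module.End ℝ V)) (hJA : Commute J A)
    (hne : (upperFocalPiece B A P).Nonempty) :
    (fixedUnitSphere B A).Nonempty ∧ IsPathConnected (upperFocalPiece B A P) := by
  obtain ⟨z₀, hz₀⟩ := hne
  obtain ⟨w₀, hw₀, -⟩ := exists_joinedIn_upperFocalPiece_fixedUnitSphere hA2 hA hPA hz₀
  have hS := isPathConnected_fixedUnitSphere hJ2 hJ hJA ⟨w₀, hw₀⟩
  have hsub := fixedUnitSphere_subset_upperFocalPiece (P := P) hA hPA
  refine ⟨⟨w₀, hw₀⟩, w₀, hsub hw₀, fun z hz => ?_⟩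
  obtain ⟨w, hw, hzw⟩ := exists_joinedIn_upperFocalPiece_fixedUnitSphere hA2 hA hPA hz
  exact ((hS.joinedIn w₀ hw₀ w hw).mono hsub).trans hzw.symm

theorem isPathConnected_lowerFocalPiece (hA2 : A * A = 1) (hA : LinearMap.IsAdjointPair B B A A)
    (hPA : ∀ j, P j * A = -(A * P j)) (hJ2 : J * J = -1)
    (hJ : LinearMap.IsAdjointPair B B J (-J : Module.End ℝ V)) (hJA : Commute J A)
    (hne : (lowerFocalPiece B A P).Nonempty) :
    (fixedUnitSphere B (-A)).Nonempty ∧ IsPathConnected (lowerFocalPiece B A P) := by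
  rw [lowerFocalPiece_eq_upperFocalPiece_neg hA2 hA] at hne ⊢
  exact isPathConnected_upperFocalPiece (by rw [neg_mul_neg, hA2]) (fun x y => by simp [hA x y])
    (fun j => by rw [mul_neg, hPA, neg_mul]) hJ2 hJ hJA.neg_right hne

end PathConnected

section CliffordAlgebra

open Finset

variable {R : Type*}

def cliffordProd [Monoid R] (P : ℕ → R) (k : ℕ) : R :=
  ((List.range k).map fun i => P (1 + i)).prod

theorem cliffordProd_succ [Monoid R] (P : ℕ → R) (k : ℕ) :
    cliffordProd P (k + 1) = cliffordProd P k * P (1 + k) := by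
  simp [cliffordProd, List.range_succ]

theorem prod_range_neg_one_pow_of_four_dvd {m : ℕ} (hm : 4 ∣ m) :
    ∏ i ∈ range m, (-1 : ℝ) ^ i = 1 := by
  obtain ⟨t, rfl⟩ := hm
  induction t with
  | zero => simp
  | succ t ih =>
    rw [show 4 * (t + 1) = 4 * t + 1 + 1 + 1 + 1 by ring]
    simp only [prod_range_succ, ih, pow_succ, pow_mul]
    norm_num

theorem prod_range_cliffEta (r m : ℕ) :
    ∏ i ∈ range m, cliffEta r (1 + i) (1 + i) = (-1) ^ min r m := by
  induction m with
  | zero => simp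
  | succ m ih =>
    rw [prod_range_succ, ih, cliffEta, if_pos rfl]
    by_cases h : m < r
    · rw [if_pos (by omega), min_eq_right (by omega : m + 1 ≤ r), min_eq_right h.le, pow_succ]
    · rw [if_neg (by omega), min_eq_left (by omega : r ≤ m + 1), min_eq_left (by omega), mul_one]

theorem commute_mul_of_mul_eq_neg [Ring R] {a b x : R} (ha : a * x = -(x * a))
    (hb : b * x = -(x * b)) : Commute (a * b) x := by
  rw [Commute, SemiconjBy, mul_assoc, hb, mul_neg, ← mul_assoc, ha, neg_mul, neg_neg, mul_assoc]

variable [Ring R] [Algebra ℝ R]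

def CliffordRelations (r m : ℕ) (P : ℕ → R) : Prop :=
  ∀ i ∈ Icc 1 m, ∀ j ∈ Icc 1 m, P i * P j + P j * P i = (2 * cliffEta r i j) • (1 : R)

namespace CliffordRelations

variable {r m : ℕ} {P : ℕ → R}

theorem mul_eq_neg_mul_of_ne (hP : CliffordRelations r m P) {i j : ℕ} (hi : i ∈ Icc 1 m)
    (hj : j ∈ Icc 1 m) (hij : i ≠ j) : P i * P j = -(P j * P i) := by
  have h := hP i hi j hj
  rw [cliffEta, if_neg hij, mul_zero, zero_smul] at h
  exact eq_neg_of_add_eq_zero_left h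

theorem mul_self (hP : CliffordRelations r m P) {i : ℕ} (hi : i ∈ Icc 1 m) :
    P i * P i = cliffEta r i i • (1 : R) := by
  have h := hP i hi i hi
  rw [← two_smul ℝ, mul_smul] at h
  exact smul_right_injective R two_ne_zero h

theorem mul_cliffordProd_of_lt (hP : CliffordRelations r m P) {j k : ℕ} (hj : j ≤ m)
    (hkj : k < j) : P j * cliffordProd P k = (-1 : ℝ) ^ k • (cliffordProd P k * P j) := by
  induction k with
  | zero => simp [cliffordProd]
  | succ k ih =>
    rw [cliffordProd_succ, ← mul_assoc, ih (by omega), smul_mul_assoc, mul_assoc,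
      hP.mul_eq_neg_mul_of_ne (mem_Icc.2 (by omega)) (mem_Icc.2 (by omega)) (by omega), mul_neg,
      ← mul_assoc, smul_neg, pow_succ, mul_neg_one, neg_smul]

theorem mul_cliffordProd_of_le (hP : CliffordRelations r m P) {j k : ℕ} (hj : 1 ≤ j)
    (hjk : j ≤ k) (hk : k ≤ m) :
    P j * cliffordProd P k = (-1 : ℝ) ^ (k + 1) • (cliffordProd P k * P j) := by
  induction k with
  | zero => omega
  | succ k ih =>
    rw [cliffordProd_succ, ← mul_assoc]
    rcases (show j = 1 + k ∨ j ≤ k by omega) with rfl | hjk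
    · rw [hP.mul_cliffordProd_of_lt (j := 1 + k) (by omega) (by omega), smul_mul_assoc]
      congr 1
      ring
    · rw [ih (by omega) (by omega), smul_mul_assoc, mul_assoc,
        hP.mul_eq_neg_mul_of_ne (mem_Icc.2 (by omega)) (mem_Icc.2 (by omega)) (by omega), mul_neg,
        ← mul_assoc, smul_neg, pow_succ _ (k + 1), mul_neg_one, neg_smul]

theorem cliffordProd_mul_self (hP : CliffordRelations r m P) {k : ℕ} (hk : k ≤ m) :
    cliffordProd P k * cliffordProd P k =
      (∏ i ∈ range k, (-1 : ℝ) ^ i * cliffEta r (1 + i) (1 + i)) • (1 : R) := by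
  induction k with
  | zero => simp [cliffordProd]
  | succ k ih =>
    calc cliffordProd P (k + 1) * cliffordProd P (k + 1)
        = cliffordProd P k * (P (1 + k) * cliffordProd P k) * P (1 + k) := by
          simp only [cliffordProd_succ, mul_assoc]
      _ = (-1 : ℝ) ^ k • (cliffordProd P k * cliffordProd P k * (P (1 + k) * P (1 + k))) := by
          rw [hP.mul_cliffordProd_of_lt (by omega) (by omega), mul_smul_comm, smul_mul_assoc]
          simp only [mul_assoc]
      _ = _ := by
          rw [ih (by omega), hP.mul_self (mem_Icc.2 (by omega)), prod_range_succ,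
            smul_mul_smul_comm, one_mul, smul_smul]
          congr 1
          ring

theorem mul_cliffordProd_eq_neg (hP : CliffordRelations r m P) (hm : Even m) {j : ℕ}
    (hj : j ∈ Icc 1 m) : P j * cliffordProd P m = -(cliffordProd P m * P j) := by
  rw [mem_Icc] at hj
  rw [hP.mul_cliffordProd_of_le hj.1 hj.2 le_rfl, hm.add_one.neg_one_pow, neg_one_smul]

theorem cliffordProd_mul_self_eq_one (hP : CliffordRelations r m P) (hm : 4 ∣ m) (hr : Even r) :
    cliffordProd P m * cliffordProd P m = 1 := by
  have hmin : Even (min r m) := by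
    rcases le_total r m with h | h
    · rwa [min_eq_left h]
    · rw [min_eq_right h]; exact Nat.even_iff.2 (by omega)
  rw [hP.cliffordProd_mul_self le_rfl, prod_mul_distrib, prod_range_neg_one_pow_of_four_dvd hm,
    prod_range_cliffEta, hmin.neg_one_pow, one_mul, one_smul]

theorem mul_mul_self_eq_neg_one (hP : CliffordRelations r m P) (hm : 2 ≤ m) (hr : r ≠ 1) :
    P 1 * P 2 * (P 1 * P 2) = -1 := by
  have h₁ : 1 ∈ Icc 1 m := mem_Icc.2 (by omega)
  have h₂ : 2 ∈ Icc 1 m := mem_Icc.2 (by omega)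
  have hη : cliffEta r 1 1 * cliffEta r 2 2 = 1 := by
    unfold cliffEta
    split_ifs <;> first | omega | norm_num
  calc P 1 * P 2 * (P 1 * P 2) = P 1 * (P 2 * P 1) * P 2 := by simp only [mul_assoc]
    _ = -((P 1 * P 1) * (P 2 * P 2)) := by
      rw [hP.mul_eq_neg_mul_of_ne h₂ h₁ (by norm_num)]; noncomm_ring
    _ = -1 := by rw [hP.mul_self h₁, hP.mul_self h₂, smul_mul_smul_comm, one_mul, hη, one_smul]

end CliffordRelations

end CliffordAlgebra

namespace CliffordRelations

open Finset

variable {V : Type*} [AddCommGroup V] [Module ℝ V] {B : LinearMap.BilinForm ℝ V} {r m : ℕ}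
  {P : ℕ → Module.End ℝ V}

theorem isAdjointPair_cliffordProd (hP : CliffordRelations r m P)
    (hadj : ∀ i ∈ Icc 1 m, LinearMap.IsAdjointPair B B (P i) (P i)) {k : ℕ} (hk : k ≤ m) :
    LinearMap.IsAdjointPair B B ⇑(cliffordProd P k)
      ⇑((∏ i ∈ range k, (-1 : ℝ) ^ i) • cliffordProd P k) := by
  induction k with
  | zero => simpa [cliffordProd] using LinearMap.isAdjointPair_one
  | succ k ih =>
    have h := (ih (by omega)).mul (hadj (1 + k) (mem_Icc.2 (by omega)))
    rwa [mul_smul_comm, hP.mul_cliffordProd_of_lt (by omega) (by omega), smul_smul,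
      ← cliffordProd_succ, ← prod_range_succ] at h

theorem isAdjointPair_mul_neg (hP : CliffordRelations r m P)
    (hadj : ∀ i ∈ Icc 1 m, LinearMap.IsAdjointPair B B (P i) (P i)) (hm : 2 ≤ m) :
    LinearMap.IsAdjointPair B B (P 1 * P 2) (-(P 1 * P 2) : Module.End ℝ V) := by
  have h := (hadj 1 (mem_Icc.2 (by omega))).mul (hadj 2 (mem_Icc.2 (by omega)))
  rwa [hP.mul_eq_neg_mul_of_ne (i := 2) (j := 1) (mem_Icc.2 (by omega))
    (mem_Icc.2 (by omega)) (by norm_num)] at h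

variable [TopologicalSpace V] [ContinuousAdd V] [ContinuousSMul ℝ V]

theorem isPathConnected_focalPieces (hP : CliffordRelations r m P)
    (hadj : ∀ i ∈ Icc 1 m, LinearMap.IsAdjointPair B B (P i) (P i)) (hm : 2 ≤ m) (hm4 : 4 ∣ m)
    (hr : Even r) :
    ((upperFocalPiece B (cliffordProd P m) fun j : Icc 1 m => P j).Nonempty →
      (fixedUnitSphere B (cliffordProd P m)).Nonempty ∧
        IsPathConnected (upperFocalPiece B (cliffordProd P m) fun j : Icc 1 m => P j)) ∧
    ((lowerFocalPiece B (cliffordProd P m) fun j : Icc 1 m => P j).Nonempty →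
      (fixedUnitSphere B (-cliffordProd P m)).Nonempty ∧
        IsPathConnected (lowerFocalPiece B (cliffordProd P m) fun j : Icc 1 m => P j)) := by
  have hA2 := hP.cliffordProd_mul_self_eq_one hm4 hr
  have hA : LinearMap.IsAdjointPair B B ⇑(cliffordProd P m) ⇑(cliffordProd P m) := by
    simpa [prod_range_neg_one_pow_of_four_dvd hm4] using hP.isAdjointPair_cliffordProd hadj le_rfl
  have hPA : ∀ j : Icc 1 m, P j * cliffordProd P m = -(cliffordProd P m * P j) := fun j =>
    hP.mul_cliffordProd_eq_neg (Nat.even_iff.2 (by omega)) j.2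
  have hJ2 := hP.mul_mul_self_eq_neg_one hm (by rintro rfl; exact Nat.not_even_one hr)
  have hJ := hP.isAdjointPair_mul_neg hadj hm
  have hJA : Commute (P 1 * P 2) (cliffordProd P m) :=
    commute_mul_of_mul_eq_neg (hPA ⟨1, mem_Icc.2 (by omega)⟩) (hPA ⟨2, mem_Icc.2 (by omega)⟩)
  exact ⟨isPathConnected_upperFocalPiece hA2 hA hPA hJ2 hJ hJA,
    isPathConnected_lowerFocalPiece hA2 hA hPA hJ2 hJ hJA⟩

end CliffordRelations

theorem psJ_mul_self (n s : ℕ) : psJ n s * psJ n s = 1 := by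
  rw [psJ, diagonal_mul_diagonal, ← diagonal_one]
  congr 1
  ext i
  split_ifs <;> norm_num

namespace IsCliffordSystem

variable {l s m r : ℕ} {P : ℕ → Matrix (Fin (2 * l)) (Fin (2 * l)) ℝ}

theorem cliffordRelations_toLinAlgEquiv' (hP : IsCliffordSystem l s m r P) :
    CliffordRelations r m fun i => toLinAlgEquiv' (P i) := fun i hi j hj => by
  simpa using congrArg toLinAlgEquiv' (hP.2 i hi j hj)

theorem isAdjointPair_toLin' (hP : IsCliffordSystem l s m r P) {i : ℕ}
    (hi : i ∈ Finset.Icc 1 m) :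
    LinearMap.IsAdjointPair (toBilin' (psJ (2 * l) s)) (toBilin' (psJ (2 * l) s))
      (toLin' (P i)) (toLin' (P i)) :=
  (isAdjointPair_toLinearMap₂' _ _ _ _).2 <| by
    rw [Matrix.IsAdjointPair, hP.1 i hi, mul_assoc, psJ_mul_self, mul_one]

end IsCliffordSystem

theorem Mplus_pieces_pathConnected_general (l s m r : ℕ)
    (hm : 2 ≤ m) (hm4 : m % 4 = 0) (hr2 : r % 2 = 0)
    (P : ℕ → Matrix (Fin (2 * l)) (Fin (2 * l)) ℝ)
    (hP : IsCliffordSystem l s m r P)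
    (Pm : Matrix (Fin (2 * l)) (Fin (2 * l)) ℝ)
    (hPm : Pm = ((List.range m).map fun k => P (1 + k)).prod)
    (Mp : Set (Fin (2 * l) → ℝ))
    (hMp : Mp = {x | psInner (2 * l) s x x = 1 ∧
      ∀ j ∈ Finset.Icc 1 m, psInner (2 * l) s (P j *ᵥ x) x = 0})
    (zpl : (Fin (2 * l) → ℝ) → (Fin (2 * l) → ℝ))
    (hzpl : zpl = fun z => (1 / 2 : ℝ) • (z + Pm *ᵥ z))
    (M1 M2 : Set (Fin (2 * l) → ℝ))
    (hM1 : M1 = {z ∈ Mp | 1 ≤ psInner (2 * l) s (zpl z) (zpl z)})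
    (hM2 : M2 = {z ∈ Mp | psInner (2 * l) s (zpl z) (zpl z) ≤ 0}) :
    (M1.Nonempty →
      ({z | Pm *ᵥ z = z ∧ psInner (2 * l) s z z = 1} :
        Set (Fin (2 * l) → ℝ)).Nonempty ∧ IsPathConnected M1) ∧
    (M2.Nonempty →
      ({z | Pm *ᵥ z = -z ∧ psInner (2 * l) s z z = 1} :
        Set (Fin (2 * l) → ℝ)).Nonempty ∧ IsPathConnected M2) := by
  have hA : toLinAlgEquiv' Pm = cliffordProd (fun i => toLinAlgEquiv' (P i)) m := by
    rw [hPm, map_list_prod, List.map_map]; rfl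
  have key := hP.cliffordRelations_toLinAlgEquiv'.isPathConnected_focalPieces
    (fun i hi => hP.isAdjointPair_toLin' hi) hm (Nat.dvd_of_mod_eq_zero hm4) (Nat.even_iff.2 hr2)
  rw [← hA] at key
  subst hM1 hM2 hMp hzpl
  simpa only [upperFocalPiece, lowerFocalPiece, focalSet, fixedUnitSphere, posComponent, psInner,
    toBilin'_apply', toLinAlgEquiv'_apply, Subtype.forall, LinearMap.neg_apply, neg_eq_iff_eq_neg]
    using key

/-- with `m ≡ 0 (mod 4)`, `r ≡ 0 (mod 2)`, `s ≤ 2l - 1`, and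
`P = P_1 ⋯ P_m`: if `M₊,₁ ≠ ∅` then `E₊(P) ∩ S^{2l-1}_s ≠ ∅` and `M₊,₁` is
path-connected; likewise, if `M₊,₂ ≠ ∅` then `E₋(P) ∩ S^{2l-1}_s ≠ ∅` and `M₊,₂`
is path-connected. Here `z₊ = (z + Pz)/2` is the `E₊(P)`-component of `z`. -/
theorem Mplus_pieces_pathConnected (l s m r : ℕ) (hl : 0 < l) (hs : s ≤ 2 * l - 1)
    (hm : 2 ≤ m) (hm4 : m % 4 = 0) (hr : r ≤ m) (hr2 : r % 2 = 0)
    (P : ℕ → Matrix (Fin (2 * l)) (Fin (2 * l)) ℝ)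
    (hP : IsCliffordSystem l s m r P)
    (Pm : Matrix (Fin (2 * l)) (Fin (2 * l)) ℝ)
    (hPm : Pm = ((List.range m).map fun k => P (1 + k)).prod)
    (Mp : Set (Fin (2 * l) → ℝ))
    (hMp : Mp = {x | psInner (2 * l) s x x = 1 ∧
      ∀ j ∈ Finset.Icc 1 m, psInner (2 * l) s (P j *ᵥ x) x = 0})
    (zpl : (Fin (2 * l) → ℝ) → (Fin (2 * l) → ℝ))
    (hzpl : zpl = fun z => (1 / 2 : ℝ) • (z + Pm *ᵥ z))
    (M1 M2 : Set (Fin (2 * l) → ℝ))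
    (hM1 : M1 = {z ∈ Mp | 1 ≤ psInner (2 * l) s (zpl z) (zpl z)})
    (hM2 : M2 = {z ∈ Mp | psInner (2 * l) s (zpl z) (zpl z) ≤ 0}) :
    (M1.Nonempty →
      ({z | Pm *ᵥ z = z ∧ psInner (2 * l) s z z = 1} :
        Set (Fin (2 * l) → ℝ)).Nonempty ∧ IsPathConnected M1) ∧
    (M2.Nonempty →
      ({z | Pm *ᵥ z = -z ∧ psInner (2 * l) s z z = 1} :
        Set (Fin (2 * l) → ℝ)).Nonempty ∧ IsPathConnected M2) :=
  Mplus_pieces_pathConnected_general l s m r hm hm4 hr2 P hP Pm hPm Mp hMp zpl hzpl M1 M2 hM1 hM2
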